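/- Let G = (V, E) be a 3-regular multigraph and let U ⊆ E be a submultiset such that (V, U) is a 2-trail and |U| is minimum among all submultisets U' ⊆ E for which (V, U') is a 2-trail. Then (V, U) is a Hamiltonian path of G, i.e., a path visiting every vertex of V exactly once. -/

import Mathlib

/-- A multigraph on vertex type `V`: a finite multiset of unordered pairs of
vertices (loops and parallel edges allowed). -/
structure Multigraph (V : Type) where
  edges : Multiset (Sym2 V)

namespace Multigraph

open Classical in
/-- The degree of a vertex: number of edge-endpoints at `v`, a loop counting twice. -/
noncomputable def deg {V : Type} (G : Multigraph V) (v : V) : ℕ :=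
  (G.edges.map fun e => if e = Sym2.diag v then 2 else if v ∈ e then 1 else 0).sum

/-- Adjacency in a multigraph. -/
def Adj {V : Type} (G : Multigraph V) (u v : V) : Prop := s(u, v) ∈ G.edges

/-- A multigraph is connected if it has a vertex and any two vertices are joined by a walk. -/
def Connected {V : Type} (G : Multigraph V) : Prop :=
  Nonempty V ∧ ∀ u v : V, Relation.ReflTransGen G.Adj u v

open Classical in
/-- `G` is the homomorphic image of `H` by the onto function `φ`: for all `u v`,
the number of edges of `G` between `u` and `v` equals the number of edges of `H`
whose endpoints are mapped by `φ` to `{u, v}`. -/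
def IsHomImage {V W : Type} (G : Multigraph V) (H : Multigraph W) (φ : W → V) : Prop :=
  Function.Surjective φ ∧
    ∀ u v : V, G.edges.count s(u, v) = (H.edges.map (Sym2.map φ)).count s(u, v)

/-- A tree: a connected multigraph with `|F| = |W| - 1`. -/
def IsTree {W : Type} (H : Multigraph W) : Prop :=
  Connected H ∧ Multiset.card H.edges + 1 = Nat.card W

/-- A multigraph is a `k`-trail if it is the homomorphic image of a (finite)
connected multigraph of maximum degree at most `k`. -/
def IsKTrail {V : Type} (G : Multigraph V) (k : ℕ) : Prop :=
  ∃ (W : Type) (_ : Finite W) (H : Multigraph W) (φ : W → V),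
    Connected H ∧ (∀ w, H.deg w ≤ k) ∧ IsHomImage G H φ

/-- `G` contains a `k`-trail if some submultiset `U` of its edges gives a `k`-trail `(V, U)`. -/
def ContainsKTrail {V : Type} (G : Multigraph V) (k : ℕ) : Prop :=
  ∃ U : Multiset (Sym2 V), U ≤ G.edges ∧ IsKTrail (Multigraph.mk U) k

/-- `lam` is a feasible multiplicity vector for `G`. -/
def FeasibleMult {V : Type} (G : Multigraph V) (lam : V → ℕ) : Prop :=
  ∃ (W : Type) (_ : Finite W) (H : Multigraph W) (φ : W → V),
    Connected H ∧ IsHomImage G H φ ∧ ∀ v : V, Nat.card (φ ⁻¹' {v}) = lam v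

end Multigraph

open Multigraph


/-- The multigraph `(V, U)` is a Hamiltonian path: there is an ordering of all vertices
such that `U` is exactly the multiset of edges between consecutive vertices. -/
def IsHamPathEdges {V : Type} [Finite V] (U : Multiset (Sym2 V)) : Prop :=
  ∃ v : Fin (Nat.card V) → V, Function.Bijective v ∧
    U = Multiset.map (fun i : Fin (Nat.card V - 1) =>
      s(v ⟨i.1, by have := i.2; omega⟩, v ⟨i.1 + 1, by have := i.2; omega⟩))
      Finset.univ.val

/-!
A 2-trail `(V, U)` is the image of a connected multigraph of maximum degree 2. Such a multigraph
has a spanning path, whose image is a walk `l` through every vertex using only edges of `U`; it is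
itself a 2-trail, so minimality gives `U = walkEdges l`. Along a walk, the degree of `v` is twice
the number of visits of `v` minus one for each end of the walk at `v`. Hence, in a cubic graph, a
vertex visited twice must be an end of `l`, and deleting that end gives a shorter spanning walk,
contradicting minimality. So `l` visits every vertex exactly once.
-/

lemma Relation.ReflTransGen.exists_mem_notMem {α : Type*} {r : α → α → Prop} {s : Set α} {a b : α}
    (h : Relation.ReflTransGen r a b) (ha : a ∈ s) (hb : b ∉ s) : ∃ x ∈ s, ∃ y ∉ s, r x y := by
  induction h with
  | refl => exact absurd ha hb
  | @tail c d _ hcd ih => by_cases hc : c ∈ s; exacts [⟨c, hc, d, hb, hcd⟩, ih hc]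

namespace Multigraph

variable {α : Type}

instance (G : Multigraph α) : Std.Symm G.Adj where
  symm u v h := by
    change s(v, u) ∈ G.edges
    rwa [Sym2.eq_swap]

lemma edges_eq_map_of_isHomImage {W : Type} {G : Multigraph α} {H : Multigraph W} {φ : W → α}
    (h : IsHomImage G H φ) : G.edges = H.edges.map (Sym2.map φ) := by
  classical
  ext e
  induction e using Sym2.ind with
  | h u v => convert h.2 u v

lemma deg_add (M N : Multiset (Sym2 α)) (v : α) :
    (mk (M + N)).deg v = (mk M).deg v + (mk N).deg v := by
  simp [deg, Multiset.map_add]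

lemma deg_zero (v : α) : (mk (0 : Multiset (Sym2 α))).deg v = 0 := by
  simp [deg]

lemma deg_cons (e : Sym2 α) (M : Multiset (Sym2 α)) (v : α) :
    (mk (e ::ₘ M)).deg v = (mk {e}).deg v + (mk M).deg v := by
  rw [← Multiset.singleton_add, deg_add]

lemma deg_mk_pair [DecidableEq α] (a b v : α) :
    (mk {s(a, b)}).deg v = (if a = v then 1 else 0) + (if b = v then 1 else 0) := by
  by_cases ha : a = v <;> by_cases hb : b = v <;> simp [deg, ha, hb, eq_comm, Sym2.diag]

lemma deg_le_deg_of_le {M : Multiset (Sym2 α)} {G : Multigraph α} (h : M ≤ G.edges) (v : α) :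
    (mk M).deg v ≤ G.deg v := by
  obtain ⟨N, hN⟩ := Multiset.le_iff_exists_add.mp h
  change _ ≤ (mk G.edges).deg v
  rw [hN, deg_add]
  exact Nat.le_add_right _ _

/-- A walk is encoded by its list of vertices `l`; `walkEdges l ≤ M` says that it is a trail of
`M`, i.e. it uses no edge more often than `M` contains it. -/
def walkEdges (l : List α) : Multiset (Sym2 α) :=
  l.zipWith (fun a b => s(a, b)) l.tail

@[simp] lemma walkEdges_nil : walkEdges ([] : List α) = 0 := rfl

@[simp] lemma walkEdges_singleton (a : α) : walkEdges [a] = 0 := rfl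

@[simp] lemma walkEdges_cons_cons (a b : α) (l : List α) :
    walkEdges (a :: b :: l) = s(a, b) ::ₘ walkEdges (b :: l) := rfl

lemma walkEdges_append_pair (l : List α) (a b : α) :
    walkEdges (l ++ [a, b]) = s(a, b) ::ₘ walkEdges (l ++ [a]) := by
  induction l with
  | nil => rfl
  | cons x l ih =>
    cases l with
    | nil => exact Multiset.cons_swap (s(x, a)) (s(a, b)) 0
    | cons y l =>
      simp only [List.cons_append, walkEdges_cons_cons] at ih ⊢
      rw [ih, Multiset.cons_swap]

@[simp] lemma walkEdges_reverse (l : List α) : walkEdges l.reverse = walkEdges l := by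
  induction l with
  | nil => rfl
  | cons a l ih =>
    cases l with
    | nil => rfl
    | cons b l =>
      rw [List.reverse_cons, List.reverse_cons, List.append_assoc, List.singleton_append,
        walkEdges_append_pair, ← List.reverse_cons, ih, walkEdges_cons_cons, Sym2.eq_swap]

lemma walkEdges_map {β : Type} (f : α → β) (l : List α) :
    walkEdges (l.map f) = (walkEdges l).map (Sym2.map f) := by
  induction l with
  | nil => rfl
  | cons a l ih =>
    cases l with
    | nil => rfl
    | cons b l =>
      rw [List.map_cons, List.map_cons, walkEdges_cons_cons, ← List.map_cons, ih]
      simp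

lemma mem_of_mem_walkEdges {l : List α} {e : Sym2 α} {x : α} (he : e ∈ walkEdges l)
    (hx : x ∈ e) : x ∈ l := by
  induction l with
  | nil => simp at he
  | cons a l ih =>
    cases l with
    | nil => simp at he
    | cons b l =>
      rcases Multiset.mem_cons.1 (walkEdges_cons_cons a b l ▸ he) with rfl | he
      · rcases Sym2.mem_iff.1 hx with rfl | rfl <;> simp
      · exact List.mem_cons_of_mem a (ih he)

lemma walkEdges_eq_map_fin (l : List α) {n : ℕ} (hn : l.length = n) :
    walkEdges l = Finset.univ.val.map
      (fun i : Fin (n - 1) => s(l[i.1]'(by omega), l[i.1 + 1]'(by omega))) := by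
  subst hn
  rw [Fin.univ_val_map, walkEdges]
  congr 1
  apply List.ext_getElem <;> simp

lemma reflTransGen_adj_walkEdges {l : List α} {x y : α} (hx : x ∈ l) (hy : y ∈ l) :
    Relation.ReflTransGen (mk (walkEdges l)).Adj x y := by
  suffices ∀ a (l : List α), ∀ x ∈ a :: l, Relation.ReflTransGen (mk (walkEdges (a :: l))).Adj a x by
    obtain ⟨a, l, rfl⟩ := List.exists_cons_of_ne_nil (List.ne_nil_of_mem hx)
    exact (symm (this a l x hx)).trans (this a l y hy)
  intro a l
  induction l generalizing a with
  | nil =>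
    rintro x hx
    rw [List.mem_singleton.1 hx]
  | cons b l ih =>
    intro x hx
    rcases List.mem_cons.1 hx with rfl | hx
    · rfl
    · refine Relation.ReflTransGen.head (b := b) (by simp [Adj]) ?_
      exact Relation.ReflTransGen.mono (fun _ _ h => Multiset.mem_cons_of_mem h) _ _ (ih b x hx)

lemma deg_walkEdges_add_endpoints [DecidableEq α] (l : List α) (v : α) :
    (mk (walkEdges l)).deg v + (if l.head? = some v then 1 else 0) +
      (if l.getLast? = some v then 1 else 0) = 2 * l.count v := by
  induction l with
  | nil => simp [deg_zero]
  | cons a l ih =>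
    cases l with
    | nil => by_cases h : a = v <;> simp [deg_zero, h]
    | cons b l =>
      rw [walkEdges_cons_cons, deg_cons, deg_mk_pair, List.count_cons]
      simp only [List.head?_cons, Option.some.injEq, List.getLast?_cons_cons] at ih ⊢
      by_cases h : a = v <;> simp [h] <;> omega

lemma head?_eq_or_getLast?_eq_of_deg_walkEdges_lt [DecidableEq α] {l : List α} {v : α}
    (h : (mk (walkEdges l)).deg v < 2 * l.count v) : l.head? = some v ∨ l.getLast? = some v := by
  have := deg_walkEdges_add_endpoints l v
  by_contra! hv
  rw [if_neg hv.1, if_neg hv.2] at this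
  omega

lemma exists_perm_walkEdges_eq_head?_eq {l : List α} {v : α}
    (h : l.head? = some v ∨ l.getLast? = some v) :
    ∃ l' : List α, l'.Perm l ∧ walkEdges l' = walkEdges l ∧ l'.head? = some v := by
  rcases h with h | h
  · exact ⟨l, List.Perm.refl l, rfl, h⟩
  · exact ⟨l.reverse, l.reverse_perm, walkEdges_reverse l, by rwa [List.head?_reverse]⟩

theorem isKTrail_two_walkEdges {l : List α} (hne : l ≠ []) (hcov : ∀ v, v ∈ l) :
    IsKTrail (mk (walkEdges l)) 2 := by
  classical
  refine ⟨Fin l.length, inferInstance, mk (walkEdges (List.finRange l.length)), l.get,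
    ⟨⟨⟨0, List.length_pos_iff.2 hne⟩⟩, fun i j => ?_⟩, fun i => ?_, fun v => ?_, fun u v => ?_⟩
  · exact reflTransGen_adj_walkEdges (List.mem_finRange i) (List.mem_finRange j)
  · have := deg_walkEdges_add_endpoints (List.finRange l.length) i
    have := List.nodup_iff_count_le_one.1 (List.nodup_finRange l.length) i
    omega
  · exact List.mem_iff_get.1 (hcov v)
  · rw [← walkEdges_map, List.map_get_finRange]

/-- An interior vertex of the path already has degree 2, so an edge leaving the path starts at one
of its ends and extends it. -/
lemma exists_longer_path {G : Multigraph α} (hconn : G.Connected) (hdeg : ∀ v, G.deg v ≤ 2)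
    {l : List α} (hnd : l.Nodup) (hne : l ≠ []) (hl : walkEdges l ≤ G.edges)
    (hcov : ¬ ∀ v, v ∈ l) :
    ∃ l' : List α, l'.Nodup ∧ walkEdges l' ≤ G.edges ∧ l'.length = l.length + 1 := by
  classical
  obtain ⟨a, ha⟩ := List.exists_mem_of_ne_nil l hne
  obtain ⟨b, hb⟩ := not_forall.1 hcov
  obtain ⟨u, hu, w, hw, huw⟩ := (hconn.2 a b).exists_mem_notMem (s := {x | x ∈ l}) ha hb
  have hwu : w ≠ u := fun h => hw (h ▸ hu)
  have hnot : s(u, w) ∉ walkEdges l := fun h => hw (mem_of_mem_walkEdges h (Sym2.mem_mk_right u w))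
  have hle : s(u, w) ::ₘ walkEdges l ≤ G.edges := (Multiset.cons_le_of_notMem hnot).2 ⟨huw, hl⟩
  have hlt : (mk (walkEdges l)).deg u < 2 * l.count u := by
    have := deg_le_deg_of_le hle u
    rw [deg_cons, deg_mk_pair, if_pos rfl, if_neg hwu] at this
    rw [List.count_eq_one_of_mem hnd hu]
    have := hdeg u
    omega
  obtain ⟨l', hperm, hE, hhead⟩ :=
    exists_perm_walkEdges_eq_head?_eq (head?_eq_or_getLast?_eq_of_deg_walkEdges_lt hlt)
  obtain ⟨t, rfl⟩ := List.head?_eq_some_iff.1 hhead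
  refine ⟨w :: u :: t, List.nodup_cons.2 ⟨fun h => hw (hperm.mem_iff.1 h), hperm.nodup_iff.2 hnd⟩,
    ?_, by simp [← hperm.length_eq]⟩
  rwa [walkEdges_cons_cons, hE, Sym2.eq_swap]

theorem exists_spanning_path [Finite α] {G : Multigraph α} (hconn : G.Connected)
    (hdeg : ∀ v, G.deg v ≤ 2) : ∃ l : List α, l.Nodup ∧ (∀ v, v ∈ l) ∧ walkEdges l ≤ G.edges := by
  have := Fintype.ofFinite α
  suffices ∀ n (l : List α), Fintype.card α - l.length = n → l.Nodup → l ≠ [] →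
      walkEdges l ≤ G.edges → ∃ l : List α, l.Nodup ∧ (∀ v, v ∈ l) ∧ walkEdges l ≤ G.edges by
    obtain ⟨a⟩ := hconn.1
    exact this _ [a] rfl (List.nodup_singleton a) (List.cons_ne_nil a []) (by simp)
  intro n
  induction n using Nat.strong_induction_on with
  | _ n ih =>
    intro l hn hnd hne hl
    by_cases hcov : ∀ v, v ∈ l
    · exact ⟨l, hnd, hcov, hl⟩
    obtain ⟨l', hnd', hl', hlen⟩ := exists_longer_path hconn hdeg hnd hne hl hcov
    have := hnd'.length_le_card
    exact ih _ (by omega) l' rfl hnd' (List.ne_nil_of_length_pos (by omega)) hl'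

theorem exists_spanning_walk_of_isKTrail_two {U : Multiset (Sym2 α)} (h : IsKTrail (mk U) 2) :
    ∃ l : List α, l ≠ [] ∧ (∀ v, v ∈ l) ∧ walkEdges l ≤ U := by
  obtain ⟨W, _, H, φ, hconn, hdeg, hhom⟩ := h
  obtain ⟨l, -, hcov, hl⟩ := exists_spanning_path hconn hdeg
  obtain ⟨w⟩ := hconn.1
  refine ⟨l.map φ, by simpa using List.ne_nil_of_mem (hcov w), fun v => ?_, ?_⟩
  · obtain ⟨w, rfl⟩ := hhom.1 v
    exact List.mem_map_of_mem (hcov w)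
  · rw [walkEdges_map, show U = _ from edges_eq_map_of_isHomImage hhom]
    exact Multiset.map_le_map hl

theorem nodup_of_shortest_spanning_walk {G : Multigraph α} (hdeg : ∀ v, G.deg v ≤ 3)
    {l : List α} (hcov : ∀ v, v ∈ l) (hl : walkEdges l ≤ G.edges)
    (hmin : ∀ l' : List α, l' ≠ [] → (∀ v, v ∈ l') → walkEdges l' ≤ G.edges →
      Multiset.card (walkEdges l) ≤ Multiset.card (walkEdges l')) :
    l.Nodup := by
  classical
  rw [List.nodup_iff_count_le_one]
  by_contra! ⟨v, hv⟩
  have hlt : (mk (walkEdges l)).deg v < 2 * l.count v := by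
    have := deg_le_deg_of_le hl v
    have := hdeg v
    omega
  obtain ⟨l', hperm, hE, hhead⟩ :=
    exists_perm_walkEdges_eq_head?_eq (head?_eq_or_getLast?_eq_of_deg_walkEdges_lt hlt)
  obtain ⟨t, rfl⟩ := List.head?_eq_some_iff.1 hhead
  have hvt : v ∈ t := by
    rw [← hperm.count_eq, List.count_cons_self] at hv
    exact List.count_pos_iff.1 (by omega)
  obtain ⟨b, t, rfl⟩ := List.exists_cons_of_ne_nil (List.ne_nil_of_mem hvt)
  rw [← hE, walkEdges_cons_cons] at hl hmin
  have := hmin (b :: t) (List.cons_ne_nil b t)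
    (fun x => (List.mem_cons.1 (hperm.mem_iff.2 (hcov x))).elim (· ▸ hvt) id)
    ((Multiset.le_cons_self _ _).trans hl)
  simp at this

theorem isHamPathEdges_walkEdges [Finite α] {l : List α} (hnd : l.Nodup) (hcov : ∀ v, v ∈ l) :
    IsHamPathEdges (walkEdges l) := by
  have hbij := (List.Nodup.getBijectionOfForallMemList l hnd hcov).2
  have hlen : l.length = Nat.card α := by simpa using Nat.card_eq_of_bijective _ hbij
  exact ⟨fun i => l.get (i.cast hlen.symm), hbij.comp (finCongr hlen.symm).bijective,
    walkEdges_eq_map_fin l hlen⟩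

end Multigraph

theorem cubic_min_twoTrail_isHamPath_general {V : Type} [Finite V]
    (G : Multigraph V) (h3 : ∀ v : V, G.deg v = 3)
    (U : Multiset (Sym2 V)) (hU : U ≤ G.edges)
    (hUtrail : IsKTrail (Multigraph.mk U) 2)
    (hmin : ∀ U' : Multiset (Sym2 V), U' ≤ G.edges → IsKTrail (Multigraph.mk U') 2 →
      Multiset.card U ≤ Multiset.card U') :
    IsHamPathEdges (V := V) U := by
  obtain ⟨l, hne, hcov, hlU⟩ := exists_spanning_walk_of_isKTrail_two hUtrail
  have hUl : walkEdges l = U :=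
    Multiset.eq_of_le_of_card_le hlU (hmin _ (hlU.trans hU) (isKTrail_two_walkEdges hne hcov))
  have hnd : l.Nodup := by
    refine nodup_of_shortest_spanning_walk (fun v => (h3 v).le) hcov (hUl ▸ hU) ?_
    intro l' hne' hcov' hl'
    exact hUl ▸ hmin _ hl' (isKTrail_two_walkEdges hne' hcov')
  exact hUl ▸ isHamPathEdges_walkEdges hnd hcov

/-- In a 3-regular multigraph, a `2`-trail `(V, U)` contained in `G` with `|U|` minimum
is a Hamiltonian path of `G`. -/
theorem cubic_min_twoTrail_isHamPath {V : Type} [Finite V]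
    (hV : 2 ≤ Nat.card V)
    (G : Multigraph V) (h3 : ∀ v : V, G.deg v = 3)
    (U : Multiset (Sym2 V)) (hU : U ≤ G.edges)
    (hUtrail : IsKTrail (Multigraph.mk U) 2)
    (hmin : ∀ U' : Multiset (Sym2 V), U' ≤ G.edges → IsKTrail (Multigraph.mk U') 2 →
      Multiset.card U ≤ Multiset.card U') :
    IsHamPathEdges (V := V) U :=
  cubic_min_twoTrail_isHamPath_general G h3 U hU hUtrail hmin
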